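/- Let M ∈ ℤ^{d×d} be regular, m := |det M|, and let f be a function on the torus T^d in the Wiener algebra A(T^d) such that the bracket sums [c(f)]_h^M = Σ_{z∈ℤ^d} c_{h+M^Tz}(f) are nonzero for all h ∈ G(M^T). Define Λ_M to be the function with Fourier coefficients c_k(Λ_M) := c_k(f) / ( m · [c(f)]_h^M ), where h ∈ G(M^T) is the unique element with k ≡ h mod M^T. Then Λ_M ∈ V_M^f and Λ_M is the fundamental interpolant: Λ_M(2πy) = 1 for y ∈ P(M) ∩ ℤ^d (i.e. y = 0) and Λ_M(2πy) = 0 for all other y ∈ P(M). -/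

import Mathlib

open MeasureTheory Complex Matrix
open scoped BigOperators Classical

noncomputable section

namespace ElastFFT

variable (d : ℕ)

/-- Real action of an integer matrix on a real vector. -/
def mulVecR (M : Matrix (Fin d) (Fin d) ℤ) (y : Fin d → ℝ) : Fin d → ℝ :=
  (M.map (Int.cast : ℤ → ℝ)).mulVec y

/-- The lattice Λ(M) = M⁻¹ ℤ^d. -/
def lattice (M : Matrix (Fin d) (Fin d) ℤ) : Set (Fin d → ℝ) :=
  {y | ∃ z : Fin d → ℤ, mulVecR d M y = fun i => (z i : ℝ)}

/-- The pattern P(M) = Λ(M) ∩ [-1/2, 1/2)^d. -/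
def pattern (M : Matrix (Fin d) (Fin d) ℤ) : Set (Fin d → ℝ) :=
  {y | y ∈ lattice d M ∧ ∀ i, y i ∈ Set.Ico (-(1/2) : ℝ) (1/2)}

/-- The generating set G(N) = ℤ^d ∩ N·[-1/2,1/2)^d. -/
def genSet (N : Matrix (Fin d) (Fin d) ℤ) : Set (Fin d → ℤ) :=
  {h | ∃ y : Fin d → ℝ, (∀ i, y i ∈ Set.Ico (-(1/2) : ℝ) (1/2)) ∧
        (fun i => (h i : ℝ)) = mulVecR d N y}

/-- The fundamental cell [-π, π)^d of the torus. -/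
def cube : Set (Fin d → ℝ) := Set.univ.pi fun _ => Set.Ico (-Real.pi) Real.pi

/-- Pairing of an integer frequency and a real point. -/
def dot (k : Fin d → ℤ) (x : Fin d → ℝ) : ℝ := ∑ i, (k i : ℝ) * x i

/-- A function on the torus: 2π-periodic in each coordinate. -/
def TorusFun (f : (Fin d → ℝ) → ℂ) : Prop :=
  ∀ (x : Fin d → ℝ) (z : Fin d → ℤ), f (x + fun i => 2 * Real.pi * (z i : ℝ)) = f x

/-- The L²(𝕋^d) inner product (normalised). -/
def torusInner (f g : (Fin d → ℝ) → ℂ) : ℂ :=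
  (((2 * Real.pi) ^ d : ℝ) : ℂ)⁻¹ * ∫ x in cube d, f x * (starRingEnd ℂ) (g x)

/-- Fourier coefficient c_k(f). -/
def fCoeff (f : (Fin d → ℝ) → ℂ) (k : Fin d → ℤ) : ℂ :=
  torusInner d f fun x => Complex.exp (Complex.I * (dot d k x : ℝ))

/-- Membership in the Wiener algebra A(𝕋^d). -/
def InWiener (f : (Fin d → ℝ) → ℂ) : Prop :=
  Summable (fun k : Fin d → ℤ => ‖fCoeff d f k‖) ∧
    ∀ x, HasSum (fun k : Fin d → ℤ =>
      fCoeff d f k * Complex.exp (Complex.I * (dot d k x : ℝ))) (f x)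

/-- The translate T(y)f = f(· - 2πy). -/
def Tr (y : Fin d → ℝ) (f : (Fin d → ℝ) → ℂ) : (Fin d → ℝ) → ℂ :=
  fun x => f (x - (2 * Real.pi) • y)

/-- The space of translates V_M^f, as a set of L² functions (a.e. equality on the cube). -/
def spanTranslates (M : Matrix (Fin d) (Fin d) ℤ) (f : (Fin d → ℝ) → ℂ) :
    Set ((Fin d → ℝ) → ℂ) :=
  {g | ∃ a : (Fin d → ℝ) → ℂ,
      g =ᵐ[volume.restrict (cube d)] fun x => ∑ᶠ y ∈ pattern d M, a y * Tr d y f x}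

/-- Orthonormality of the translates of f on the pattern. -/
def OrthonormalTranslates (M : Matrix (Fin d) (Fin d) ℤ) (f : (Fin d → ℝ) → ℂ) : Prop :=
  ∀ y ∈ pattern d M, ∀ y' ∈ pattern d M,
    torusInner d (Tr d y f) (Tr d y' f) = if y = y' then 1 else 0

/-- A fundamental interpolant of V_M^f. -/
def IsFundamentalInterpolant (M : Matrix (Fin d) (Fin d) ℤ) (f Λ : (Fin d → ℝ) → ℂ) : Prop :=
  Λ ∈ spanTranslates d M f ∧
    ∀ y ∈ pattern d M,
      Λ ((2 * Real.pi) • y) = if ∃ z : Fin d → ℤ, y = fun i => (z i : ℝ) then 1 else 0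

/-- Frobenius inner product of complex matrices. -/
def frobInner (A B : Matrix (Fin d) (Fin d) ℂ) : ℂ :=
  ∑ i, ∑ j, A i j * (starRingEnd ℂ) (B i j)

/-- Application of a fourth-order (real) tensor to a complex matrix. -/
def capply (C : Fin d → Fin d → Fin d → Fin d → ℝ) (γ : Matrix (Fin d) (Fin d) ℂ) :
    Matrix (Fin d) (Fin d) ℂ :=
  Matrix.of fun i j => ∑ a, ∑ b, (C i j a b : ℂ) * γ a b

/-- The usual symmetries of a stiffness tensor. -/
def TensorSymm (C : Fin d → Fin d → Fin d → Fin d → ℝ) : Prop :=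
  ∀ i j k l, C i j k l = C j i k l ∧ C i j k l = C i j l k ∧ C i j k l = C k l i j

/-- Positive definiteness of a reference stiffness on symmetric matrices. -/
def TensorPosDef (C : Fin d → Fin d → Fin d → Fin d → ℝ) : Prop :=
  ∃ c : ℝ, 0 < c ∧ ∀ γ : Matrix (Fin d) (Fin d) ℂ, γ.IsSymm →
    c * ∑ i, ∑ j, Complex.normSq (γ i j) ≤ (frobInner d (capply d C γ) γ).re

/-- The symmetrised gradient D_k u = (i/2)(k uᵀ + u kᵀ). -/
def symGrad (k : Fin d → ℝ) (u : Fin d → ℂ) : Matrix (Fin d) (Fin d) ℂ :=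
  Matrix.of fun i j => (Complex.I / 2) * ((k i : ℂ) * u j + u i * (k j : ℂ))

/-- The adjoint D_k* of the symmetrised gradient (w.r.t. Frobenius inner product). -/
def symGradAdj (k : Fin d → ℝ) (A : Matrix (Fin d) (Fin d) ℂ) : Fin d → ℂ :=
  fun j => ∑ i, (-Complex.I / 2) * (k i : ℂ) * (A i j + A j i)

/-- The acoustic tensor A(k) = D_k* ∘ C⁰ ∘ D_k as a d×d complex matrix. -/
def acoustic (C0 : Fin d → Fin d → Fin d → Fin d → ℝ) (k : Fin d → ℝ) :
    Matrix (Fin d) (Fin d) ℂ :=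
  Matrix.of fun i j => symGradAdj d k (capply d C0 (symGrad d k (Pi.single j 1))) i

/-- The Green operator symbol Γ̂⁰_k = D_k ∘ A(k)⁻¹ ∘ D_k* for real k ≠ 0. -/
def greenSymR (C0 : Fin d → Fin d → Fin d → Fin d → ℝ) (k : Fin d → ℝ)
    (E : Matrix (Fin d) (Fin d) ℂ) : Matrix (Fin d) (Fin d) ℂ :=
  symGrad d k ((acoustic d C0 k)⁻¹.mulVec (symGradAdj d k E))

/-- The Green operator symbol for integer frequencies, Γ̂⁰_0 := 0. -/
def greenSymZ (C0 : Fin d → Fin d → Fin d → Fin d → ℝ) (k : Fin d → ℤ)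
    (E : Matrix (Fin d) (Fin d) ℂ) : Matrix (Fin d) (Fin d) ℂ :=
  if k = 0 then 0 else greenSymR d C0 (fun i => (k i : ℝ)) E

/-- Entrywise Fourier coefficient of a matrix field. -/
def mFourier (ε : (Fin d → ℝ) → Matrix (Fin d) (Fin d) ℂ) (k : Fin d → ℤ) :
    Matrix (Fin d) (Fin d) ℂ :=
  Matrix.of fun i j => fCoeff d (fun x => ε x i j) k

/-- The periodised Green symbol Γ̂^p_h = m Σ_z Γ̂⁰_{h+Mᵀz} |c_{h+Mᵀz}(f)|². -/
def gammaPSym (M : Matrix (Fin d) (Fin d) ℤ) (C0 : Fin d → Fin d → Fin d → Fin d → ℝ)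
    (f : (Fin d → ℝ) → ℂ) (h : Fin d → ℤ) (E : Matrix (Fin d) (Fin d) ℂ) :
    Matrix (Fin d) (Fin d) ℂ :=
  (M.det.natAbs : ℂ) • ∑' z : Fin d → ℤ,
    ((Complex.normSq (fCoeff d f (h + Matrix.mulVec Mᵀ z)) : ℝ) : ℂ) •
      greenSymZ d C0 (h + Matrix.mulVec Mᵀ z) E

/-- The periodised Green operator applied to a coefficient field: DFT, multiply, inverse DFT. -/
def gammaP (M : Matrix (Fin d) (Fin d) ℤ) (C0 : Fin d → Fin d → Fin d → Fin d → ℝ)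
    (f : (Fin d → ℝ) → ℂ) (V : (Fin d → ℝ) → Matrix (Fin d) (Fin d) ℂ)
    (x : Fin d → ℝ) : Matrix (Fin d) (Fin d) ℂ :=
  ((M.det.natAbs : ℂ))⁻¹ • ∑ᶠ h ∈ genSet d Mᵀ,
    Complex.exp (2 * Real.pi * Complex.I * (dot d h x : ℝ)) •
      gammaPSym d M C0 f h
        (∑ᶠ y ∈ pattern d M, Complex.exp (-(2 * Real.pi * Complex.I) * (dot d h y : ℝ)) • V y)

/-- The Dirichlet kernel D_M. -/
def dirichlet (M : Matrix (Fin d) (Fin d) ℤ) : (Fin d → ℝ) → ℂ :=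
  fun x => ∑ᶠ h ∈ genSet d Mᵀ, Complex.exp (Complex.I * (dot d h x : ℝ))


/-!
Write `Λ_M(x) = Σ_k c_k(f) φ_k e^{ik·x}`, where the multiplier `φ_k = (m [c(f)]_h^M)⁻¹` depends
only on the residue `h` of `k` modulo `Mᵀℤ^d`. Every such periodic multiplier gives an element of
`V_M^f`: expanding `φ`, a function on `ℤ^d / Mᵀℤ^d`, in the characters `k ↦ e^{-2πi k·y}`,
`y ∈ P(M)`, as `φ_k = Σ_y a_y e^{-2πi k·y}` exhibits it as the multiplier of `Σ_y a_y T(y)f`.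
At a pattern point `2πy` the Fourier series splits along the residues `h ∈ G(Mᵀ)`; each class
contributes `φ_h [c(f)]_h^M e^{2πi h·y} = e^{2πi h·y} / m`, and `Σ_{h ∈ G(Mᵀ)} e^{2πi h·y}` is `m`
for `y ∈ ℤ^d` and `0` otherwise. Both character sums are orthogonality relations for the finite
group `ℤ^d / Nℤ^d` (with `N = Mᵀ`, and with `N = M` through `P(M) = M⁻¹ G(M)`), of which `G(N)`
is a set of representatives and whose order is `|det N|`.
-/

section IntegerMatrices

variable {d}

lemma intCast_vec_injective : Function.Injective fun (z : Fin d → ℤ) (i : Fin d) => (z i : ℝ) :=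
  Int.cast_injective.comp_left

lemma mulVecR_intCast (N : Matrix (Fin d) (Fin d) ℤ) (z : Fin d → ℤ) :
    mulVecR d N (fun i => (z i : ℝ)) = fun i => ((N *ᵥ z) i : ℝ) := by
  funext i
  simp [mulVecR, Matrix.mulVec, dotProduct]

lemma isUnit_det_map_intCast {N : Matrix (Fin d) (Fin d) ℤ} (hN : N.det ≠ 0) :
    IsUnit (N.map (Int.cast : ℤ → ℝ)).det := by
  rw [isUnit_iff_ne_zero, ← Int.cast_det]
  exact_mod_cast hN

lemma mulVecR_injective {N : Matrix (Fin d) (Fin d) ℤ} (hN : N.det ≠ 0) :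
    Function.Injective (mulVecR d N) :=
  Matrix.mulVec_injective_iff_isUnit.2 <|
    (Matrix.isUnit_iff_isUnit_det _).2 (isUnit_det_map_intCast hN)

lemma mulVec_injective_of_det_ne_zero {N : Matrix (Fin d) (Fin d) ℤ} (hN : N.det ≠ 0) :
    Function.Injective (N *ᵥ ·) := by
  intro v w hvw
  by_contra hne
  exact hN <| Matrix.exists_mulVec_eq_zero_iff.1
    ⟨v - w, sub_ne_zero.2 hne, by simp only [Matrix.mulVec_sub, hvw, sub_self]⟩

end IntegerMatrices

section GeneratingSet

variable {d} {N : Matrix (Fin d) (Fin d) ℤ}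

lemma eq_of_mem_genSet_of_eq_add_mulVec (hN : N.det ≠ 0) {h h' z : Fin d → ℤ}
    (hh : h ∈ genSet d N) (hh' : h' ∈ genSet d N) (hz : h = h' + N *ᵥ z) : h = h' := by
  obtain ⟨y, hy, rfl_h⟩ := hh
  obtain ⟨y', hy', rfl_h'⟩ := hh'
  have hyz : y - y' = fun i => (z i : ℝ) := by
    apply mulVecR_injective hN
    have : mulVecR d N (y - y') = mulVecR d N y - mulVecR d N y' := Matrix.mulVec_sub _ _ _
    rw [this, mulVecR_intCast, ← rfl_h, ← rfl_h', hz]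
    funext i
    simp
  have hz0 : z = 0 := by
    funext i
    have h1 := congrFun hyz i
    have : (z i : ℝ) < 1 ∧ (-1 : ℝ) < z i := by
      simp only [Pi.sub_apply] at h1
      constructor <;> linarith [(hy i).1, (hy i).2, (hy' i).1, (hy' i).2]
    have : z i < 1 ∧ -1 < z i := by exact_mod_cast this
    simp only [Pi.zero_apply]
    omega
  simpa [hz0] using hz

lemma sub_round_mem_Ico (x : ℝ) : x - round x ∈ Set.Ico (-(1/2) : ℝ) (1/2) :=
  ⟨by linarith [round_le_add_half x], by linarith [sub_half_lt_round x]⟩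

lemma exists_mem_genSet_eq_add_mulVec (hN : N.det ≠ 0) (k : Fin d → ℤ) :
    ∃ h ∈ genSet d N, ∃ z, k = h + N *ᵥ z := by
  set B := N.map (Int.cast : ℤ → ℝ)
  set v : Fin d → ℝ := B⁻¹ *ᵥ fun i => (k i : ℝ)
  set z : Fin d → ℤ := fun i => round (v i)
  refine ⟨k - N *ᵥ z, ⟨v - fun i => (z i : ℝ), fun i => sub_round_mem_Ico (v i), ?_⟩, z, by abel⟩
  have hBv : B *ᵥ v = fun i => (k i : ℝ) := by
    rw [Matrix.mulVec_mulVec, Matrix.mul_nonsing_inv _ (isUnit_det_map_intCast hN),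
      Matrix.one_mulVec]
  have : mulVecR d N (v - fun i => (z i : ℝ)) = B *ᵥ v - mulVecR d N fun i => (z i : ℝ) :=
    Matrix.mulVec_sub _ _ _
  rw [this, hBv, mulVecR_intCast]
  funext i
  simp

end GeneratingSet

section Quotient

variable {d} {N : Matrix (Fin d) (Fin d) ℤ}

abbrev mulVecRange (N : Matrix (Fin d) (Fin d) ℤ) : AddSubgroup (Fin d → ℤ) :=
  (LinearMap.range (Matrix.toLin' N)).toAddSubgroup

lemma natCard_quotient_mulVecRange (hN : N.det ≠ 0) :
    Nat.card ((Fin d → ℤ) ⧸ mulVecRange N) = N.det.natAbs := by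
  have hinj : Function.Injective (Matrix.toLin' N) := mulVec_injective_of_det_ne_zero hN
  rw [← LinearMap.det_toLin' N]
  exact (Submodule.natAbs_det_equiv _ (LinearEquiv.ofInjective _ hinj)).symm

lemma bijOn_quotientMk_genSet (hN : N.det ≠ 0) :
    Set.BijOn (QuotientAddGroup.mk : _ → (Fin d → ℤ) ⧸ mulVecRange N) (genSet d N) Set.univ := by
  refine ⟨Set.mapsTo_univ _ _, fun h hh h' hh' hhh' => ?_, fun q _ => ?_⟩
  · obtain ⟨z, hz⟩ := QuotientAddGroup.eq.1 hhh'
    rw [Matrix.toLin'_apply] at hz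
    exact (eq_of_mem_genSet_of_eq_add_mulVec hN hh' hh (by rw [hz]; abel)).symm
  · induction q using QuotientAddGroup.induction_on with
    | H k =>
      obtain ⟨h, hh, z, rfl⟩ := exists_mem_genSet_eq_add_mulVec hN k
      exact ⟨h, hh, QuotientAddGroup.eq.2 ⟨z, by simp [Matrix.toLin'_apply]⟩⟩

lemma natCard_genSet (hN : N.det ≠ 0) : Nat.card (genSet d N) = N.det.natAbs := by
  rw [Nat.card_congr (bijOn_quotientMk_genSet hN).equiv, Nat.card_univ,
    natCard_quotient_mulVecRange hN]

lemma genSet_finite (hN : N.det ≠ 0) : (genSet d N).Finite :=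
  Set.finite_coe_iff.1 <| Nat.finite_of_card_ne_zero <| by
    rw [natCard_genSet hN]; exact Int.natAbs_ne_zero.2 hN

end Quotient

section Characters

variable {d}

lemma dot_eq_dotProduct (k : Fin d → ℤ) (x : Fin d → ℝ) :
    dot d k x = (fun i => (k i : ℝ)) ⬝ᵥ x := rfl

lemma dot_mulVec (N : Matrix (Fin d) (Fin d) ℤ) (z : Fin d → ℤ) (v : Fin d → ℝ) :
    dot d (N *ᵥ z) v = dot d z (mulVecR d Nᵀ v) := by
  rw [dot_eq_dotProduct, dot_eq_dotProduct, ← mulVecR_intCast, mulVecR, mulVecR,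
    dotProduct_comm, Matrix.dotProduct_mulVec, Matrix.transpose_map, Matrix.mulVec_transpose,
    dotProduct_comm]

def expChar (v : Fin d → ℝ) : AddChar (Fin d → ℤ) ℂ where
  toFun k := Complex.exp (2 * Real.pi * Complex.I * (dot d k v : ℝ))
  map_zero_eq_one' := by simp [dot]
  map_add_eq_mul' k k' := by
    rw [← Complex.exp_add, ← mul_add]
    congr 2
    simp only [dot, Pi.add_apply, Int.cast_add, add_mul, Finset.sum_add_distrib]
    push_cast
    ring

lemma expChar_apply (v : Fin d → ℝ) (k : Fin d → ℤ) :
    expChar v k = Complex.exp (2 * Real.pi * Complex.I * (dot d k v : ℝ)) := rfl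

lemma exp_I_dot_two_pi_smul (k : Fin d → ℤ) (v : Fin d → ℝ) :
    Complex.exp (Complex.I * (dot d k ((2 * Real.pi) • v) : ℝ)) = expChar v k := by
  have : dot d k ((2 * Real.pi) • v) = 2 * Real.pi * dot d k v := by
    simp only [dot, Pi.smul_apply, smul_eq_mul, Finset.mul_sum]
    exact Finset.sum_congr rfl fun i _ => by ring
  rw [expChar_apply, this]
  push_cast
  ring_nf

lemma expChar_apply_eq_one_iff {v : Fin d → ℝ} {k : Fin d → ℤ} :
    expChar v k = 1 ↔ ∃ n : ℤ, dot d k v = n := by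
  rw [expChar_apply, Complex.exp_eq_one_iff]
  refine exists_congr fun n => ?_
  rw [mul_comm, mul_left_inj' (by simp [Real.pi_ne_zero, Complex.I_ne_zero])]
  exact_mod_cast Iff.rfl

lemma expChar_eq_zero_iff {v : Fin d → ℝ} :
    expChar v = 0 ↔ ∃ z : Fin d → ℤ, v = fun i => (z i : ℝ) := by
  rw [AddChar.eq_zero_iff]
  constructor
  · intro h
    choose z hz using fun j => expChar_apply_eq_one_iff.1 (h (Pi.single j 1))
    refine ⟨z, funext fun j => ?_⟩
    simpa [dot, Pi.single_apply] using hz j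
  · rintro ⟨z, rfl⟩ k
    exact expChar_apply_eq_one_iff.2 ⟨∑ i, k i * z i, by simp [dot]⟩

lemma expChar_mulVec {N : Matrix (Fin d) (Fin d) ℤ} {v : Fin d → ℝ} (hv : v ∈ lattice d Nᵀ)
    (z : Fin d → ℤ) : expChar v (N *ᵥ z) = 1 := by
  obtain ⟨w, hw⟩ := hv
  exact expChar_apply_eq_one_iff.2 ⟨∑ i, z i * w i, by rw [dot_mulVec, hw]; simp [dot]⟩

lemma norm_expChar (v : Fin d → ℝ) (k : Fin d → ℤ) : ‖expChar v k‖ = 1 := by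
  rw [expChar_apply, Complex.norm_exp]
  simp

lemma exp_I_dot_sub_two_pi_smul (k : Fin d → ℤ) (x y : Fin d → ℝ) :
    Complex.exp (Complex.I * (dot d k (x - (2 * Real.pi) • y) : ℝ)) =
      Complex.exp (Complex.I * (dot d k x : ℝ)) * expChar y (-k) := by
  rw [← exp_I_dot_two_pi_smul, ← Complex.exp_add]
  congr 1
  simp only [dot, Pi.sub_apply, Pi.neg_apply, Int.cast_neg, mul_sub, neg_mul,
    Finset.sum_sub_distrib, Finset.sum_neg_distrib]
  push_cast
  ring

end Characters

section CharacterSums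

variable {d} {N : Matrix (Fin d) (Fin d) ℤ}

lemma finsum_mem_genSet_expChar (hN : N.det ≠ 0) {v : Fin d → ℝ} (hv : v ∈ lattice d Nᵀ) :
    ∑ᶠ h ∈ genSet d N, expChar v h =
      if ∃ z : Fin d → ℤ, v = fun i => (z i : ℝ) then (N.det.natAbs : ℂ) else 0 := by
  let ψ : AddChar ((Fin d → ℤ) ⧸ mulVecRange N) ℂ :=
    AddChar.toAddMonoidHomEquiv.symm <| QuotientAddGroup.lift _ (expChar v).toAddMonoidHom <| by
      rintro _ ⟨z, rfl⟩
      simp [Matrix.toLin'_apply, expChar_mulVec hv z]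
  have hψ : ψ = 0 ↔ expChar v = 0 := by
    simp only [AddChar.eq_zero_iff, QuotientAddGroup.mk_surjective.forall]
    rfl
  have hcard := natCard_quotient_mulVecRange hN
  have : Finite ((Fin d → ℤ) ⧸ mulVecRange N) :=
    Nat.finite_of_card_ne_zero (by rw [hcard]; exact Int.natAbs_ne_zero.2 hN)
  have := Fintype.ofFinite ((Fin d → ℤ) ⧸ mulVecRange N)
  rw [finsum_mem_eq_of_bijOn (f := expChar v) _ (bijOn_quotientMk_genSet hN) (g := ψ)
      fun h _ => rfl,
    finsum_mem_univ, finsum_eq_sum_of_fintype, AddChar.sum_eq_ite]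
  simp only [hψ, expChar_eq_zero_iff, Fintype.card_eq_nat_card, hcard]

end CharacterSums

section Pattern

variable {d} {M : Matrix (Fin d) (Fin d) ℤ}

lemma pattern_eq_image_genSet (hM : M.det ≠ 0) :
    pattern d M = (fun h : Fin d → ℤ =>
      (M.map (Int.cast : ℤ → ℝ))⁻¹ *ᵥ fun i => (h i : ℝ)) '' genSet d M := by
  have hinv : (M.map (Int.cast : ℤ → ℝ))⁻¹ * M.map Int.cast = 1 :=
    Matrix.nonsing_inv_mul _ (isUnit_det_map_intCast hM)
  ext y
  constructor
  · rintro ⟨⟨z, hz⟩, hy⟩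
    refine ⟨z, ⟨y, hy, hz.symm⟩, ?_⟩
    dsimp only
    rw [← hz, mulVecR, Matrix.mulVec_mulVec, hinv, Matrix.one_mulVec]
  · rintro ⟨h, ⟨y, hy, hh⟩, rfl⟩
    dsimp only
    rw [hh, mulVecR, Matrix.mulVec_mulVec, hinv, Matrix.one_mulVec]
    exact ⟨⟨h, hh.symm⟩, hy⟩

lemma pattern_finite (hM : M.det ≠ 0) : (pattern d M).Finite :=
  pattern_eq_image_genSet hM ▸ (genSet_finite hM).image _

-- `g · M⁻¹ h = h · M⁻ᵀ g` turns this into a character sum over `G(M) = M P(M)`.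
lemma finsum_mem_pattern_expChar (hM : M.det ≠ 0) (g : Fin d → ℤ) :
    ∑ᶠ y ∈ pattern d M, expChar y g =
      if ∃ z : Fin d → ℤ, g = Mᵀ *ᵥ z then (M.det.natAbs : ℂ) else 0 := by
  set B := M.map (Int.cast : ℤ → ℝ)
  set v : Fin d → ℝ := B⁻¹ᵀ *ᵥ fun i => (g i : ℝ)
  have hv : mulVecR d Mᵀ v = fun i => (g i : ℝ) := by
    rw [mulVecR, Matrix.transpose_map, Matrix.mulVec_mulVec, ← Matrix.transpose_mul,
      Matrix.nonsing_inv_mul _ (isUnit_det_map_intCast hM), Matrix.transpose_one,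
      Matrix.one_mulVec]
  have hswap : ∀ h : Fin d → ℤ, expChar (B⁻¹ *ᵥ fun i => (h i : ℝ)) g = expChar v h := by
    intro h
    rw [expChar_apply, expChar_apply, dot_eq_dotProduct, dot_eq_dotProduct,
      Matrix.dotProduct_mulVec, ← Matrix.mulVec_transpose, dotProduct_comm]
  have hinj : Function.Injective fun h : Fin d → ℤ => B⁻¹ *ᵥ fun i => (h i : ℝ) :=
    (Matrix.mulVec_injective_iff_isUnit.2 ((Matrix.isUnit_iff_isUnit_det _).2
      (Matrix.isUnit_nonsing_inv_det _ (isUnit_det_map_intCast hM)))).comp intCast_vec_injective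
  have hMT : Mᵀ.det ≠ 0 := by rwa [Matrix.det_transpose]
  have hint : (∃ z : Fin d → ℤ, v = fun i => (z i : ℝ)) ↔ ∃ z, g = Mᵀ *ᵥ z := by
    refine exists_congr fun z => ?_
    rw [← (mulVecR_injective hMT).eq_iff, hv, mulVecR_intCast, intCast_vec_injective.eq_iff]
  rw [pattern_eq_image_genSet hM, finsum_mem_image hinj.injOn,
    finsum_mem_congr rfl fun h _ => hswap h, finsum_mem_genSet_expChar hM ⟨g, hv⟩]
  simp only [hint]

end Pattern

section Residues

variable {d} {N : Matrix (Fin d) (Fin d) ℤ}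

lemma add_mulVec_bijective (hN : N.det ≠ 0) :
    Function.Bijective fun p : genSet d N × (Fin d → ℤ) => p.1.1 + N *ᵥ p.2 := by
  refine ⟨fun ⟨⟨h, hh⟩, z⟩ ⟨⟨h', hh'⟩, z'⟩ heq => ?_, fun k => ?_⟩
  · dsimp only at heq
    have hh_eq : h = h' := eq_of_mem_genSet_of_eq_add_mulVec hN hh hh' (z := z' - z) <| by
      rw [Matrix.mulVec_sub]
      linear_combination (norm := abel_nf) heq
    subst hh_eq
    simpa using mulVec_injective_of_det_ne_zero hN (add_left_cancel heq)
  · obtain ⟨h, hh, z, rfl⟩ := exists_mem_genSet_eq_add_mulVec hN k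
    exact ⟨(⟨h, hh⟩, z), rfl⟩

lemma tsum_eq_finsum_mem_genSet_tsum {E : Type*} [NormedAddCommGroup E] [CompleteSpace E]
    (hN : N.det ≠ 0) {F : (Fin d → ℤ) → E} (hF : Summable F) :
    ∑' k, F k = ∑ᶠ h ∈ genSet d N, ∑' z, F (h + N *ᵥ z) := by
  have : Finite (genSet d N) := genSet_finite hN
  let e := Equiv.ofBijective _ (add_mulVec_bijective hN)
  have he : Summable (F ∘ e) := e.summable_iff.2 hF
  calc ∑' k, F k = ∑' p, (F ∘ e) p := (e.tsum_eq F).symm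
    _ = ∑' (h : genSet d N) (z : Fin d → ℤ), F (h + N *ᵥ z) := he.tsum_prod' he.prod_factor
    _ = ∑ᶠ h ∈ genSet d N, ∑' z, F (h + N *ᵥ z) := by
      rw [tsum_eq_finsum (Set.toFinite _)]
      exact finsum_set_coe_eq_finsum_mem (f := fun h => ∑' z, F (h + N *ᵥ z)) _

lemma exists_forall_norm_le_of_periodic {E : Type*} [NormedAddCommGroup E] (hN : N.det ≠ 0)
    {φ : (Fin d → ℤ) → E} (hφ : ∀ k z, φ (k + N *ᵥ z) = φ k) : ∃ C, ∀ k, ‖φ k‖ ≤ C := by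
  obtain ⟨C, hC⟩ := ((genSet_finite hN).image fun h => ‖φ h‖).bddAbove
  refine ⟨C, fun k => ?_⟩
  obtain ⟨h, hh, z, rfl⟩ := exists_mem_genSet_eq_add_mulVec hN k
  exact hφ h z ▸ hC ⟨h, hh, rfl⟩

lemma finsum_mem_genSet_ite_sub_eq_mulVec {E : Type*} [AddCommMonoid E] (hN : N.det ≠ 0)
    {φ : (Fin d → ℤ) → E} (hφ : ∀ k z, φ (k + N *ᵥ z) = φ k) (k : Fin d → ℤ) :
    ∑ᶠ h ∈ genSet d N, (if ∃ z, h - k = N *ᵥ z then φ h else 0) = φ k := by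
  obtain ⟨h₀, hh₀, z₀, rfl⟩ := exists_mem_genSet_eq_add_mulVec hN k
  rw [finsum_mem_eq_finite_toFinset_sum _ (genSet_finite hN),
    Finset.sum_eq_single_of_mem h₀ ((genSet_finite hN).mem_toFinset.2 hh₀), hφ,
    if_pos ⟨-z₀, by rw [Matrix.mulVec_neg]; abel⟩]
  intro h hh hne
  refine if_neg fun ⟨z, hz⟩ => hne ?_
  refine eq_of_mem_genSet_of_eq_add_mulVec hN ((genSet_finite hN).mem_toFinset.1 hh) hh₀
    (z := z₀ + z) ?_
  rw [Matrix.mulVec_add, ← hz]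
  abel

lemma selector_eq_of_eq_add_mulVec {r : (Fin d → ℤ) → (Fin d → ℤ)} (hN : N.det ≠ 0)
    (hr : ∀ k, r k ∈ genSet d N ∧ ∃ z, k = r k + N *ᵥ z) {h k z : Fin d → ℤ}
    (hh : h ∈ genSet d N) (hk : k = h + N *ᵥ z) : r k = h := by
  obtain ⟨z', hz'⟩ := (hr k).2
  refine eq_of_mem_genSet_of_eq_add_mulVec hN (hr k).1 hh (z := z - z') ?_
  rw [Matrix.mulVec_sub]
  linear_combination (norm := abel_nf) hk - hz'

end Residues

section FourierMultiplier

variable {d} {M : Matrix (Fin d) (Fin d) ℤ} {f : (Fin d → ℝ) → ℂ} {φ : (Fin d → ℤ) → ℂ}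

def fourierMul (f : (Fin d → ℝ) → ℂ) (φ : (Fin d → ℤ) → ℂ) (x : Fin d → ℝ) : ℂ :=
  ∑' k, fCoeff d f k * φ k * Complex.exp (Complex.I * (dot d k x : ℝ))

def bracketSum (M : Matrix (Fin d) (Fin d) ℤ) (f : (Fin d → ℝ) → ℂ) (h : Fin d → ℤ) : ℂ :=
  ∑' z, fCoeff d f (h + Mᵀ *ᵥ z)

lemma finsum_mem_pattern_inverse_dft (hM : M.det ≠ 0) (hφ : ∀ k z, φ (k + Mᵀ *ᵥ z) = φ k)
    (k : Fin d → ℤ) :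
    ∑ᶠ y ∈ pattern d M, ((M.det.natAbs : ℂ)⁻¹ * ∑ᶠ h ∈ genSet d Mᵀ, φ h * expChar y h) *
      expChar y (-k) = φ k := by
  have hMT : Mᵀ.det ≠ 0 := by rwa [Matrix.det_transpose]
  have hm : (M.det.natAbs : ℂ) ≠ 0 := by exact_mod_cast Int.natAbs_ne_zero.2 hM
  calc _ = ∑ᶠ y ∈ pattern d M, ∑ᶠ h ∈ genSet d Mᵀ,
        (M.det.natAbs : ℂ)⁻¹ * φ h * expChar y (h - k) := by
        refine finsum_mem_congr rfl fun y _ => ?_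
        rw [mul_finsum_mem, finsum_mem_mul]
        refine finsum_mem_congr rfl fun h _ => ?_
        rw [sub_eq_add_neg, AddChar.map_add_eq_mul]
        ring
    _ = ∑ᶠ h ∈ genSet d Mᵀ, (if ∃ z, h - k = Mᵀ *ᵥ z then φ h else 0) := by
        rw [finsum_mem_comm _ (pattern_finite hM) (genSet_finite hMT)]
        refine finsum_mem_congr rfl fun h _ => ?_
        rw [← mul_finsum_mem, finsum_mem_pattern_expChar hM]
        split_ifs
        · field_simp
        · rw [mul_zero]
    _ = φ k := finsum_mem_genSet_ite_sub_eq_mulVec hMT hφ k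

lemma fourierMul_mem_spanTranslates (hM : M.det ≠ 0) (hfW : InWiener d f)
    (hφ : ∀ k z, φ (k + Mᵀ *ᵥ z) = φ k) : fourierMul f φ ∈ spanTranslates d M f := by
  set a : (Fin d → ℝ) → ℂ := fun y =>
    (M.det.natAbs : ℂ)⁻¹ * ∑ᶠ h ∈ genSet d Mᵀ, φ h * expChar y h
  refine ⟨a, Filter.Eventually.of_forall fun x => ?_⟩
  have hP := pattern_finite hM
  have hsum : HasSum (fun k => ∑ y ∈ hP.toFinset, a y *
      (fCoeff d f k * Complex.exp (Complex.I * (dot d k x : ℝ)) * expChar y (-k)))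
      (∑ y ∈ hP.toFinset, a y * Tr d y f x) := by
    refine hasSum_sum fun y _ => (hfW.2 (x - (2 * Real.pi) • y)).mul_left (a y) |>.congr_fun ?_
    intro k
    simp only [a, exp_I_dot_sub_two_pi_smul, mul_assoc]
  show fourierMul f φ x = ∑ᶠ y ∈ pattern d M, a y * Tr d y f x
  rw [finsum_mem_eq_finite_toFinset_sum _ hP, ← hsum.tsum_eq]
  refine tsum_congr fun k => ?_
  rw [← finsum_mem_pattern_inverse_dft hM hφ k, finsum_mem_eq_finite_toFinset_sum _ hP,
    Finset.mul_sum, Finset.sum_mul]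
  refine Finset.sum_congr rfl fun y _ => ?_
  ring

lemma fourierMul_two_pi_smul (hM : M.det ≠ 0) (hfW : InWiener d f)
    (hφ : ∀ k z, φ (k + Mᵀ *ᵥ z) = φ k) {y : Fin d → ℝ} (hy : y ∈ lattice d M) :
    fourierMul f φ ((2 * Real.pi) • y) =
      ∑ᶠ h ∈ genSet d Mᵀ, φ h * expChar y h * bracketSum M f h := by
  have hMT : Mᵀ.det ≠ 0 := by rwa [Matrix.det_transpose]
  have hyT : y ∈ lattice d Mᵀᵀ := by rwa [Matrix.transpose_transpose]
  obtain ⟨C, hC⟩ := exists_forall_norm_le_of_periodic hMT hφ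
  have hsum : Summable fun k => fCoeff d f k * φ k * expChar y k :=
    Summable.of_norm_bounded (hfW.1.mul_right C) fun k => by
      rw [norm_mul, norm_mul, norm_expChar, mul_one]
      exact mul_le_mul_of_nonneg_left (hC k) (norm_nonneg _)
  simp only [fourierMul, exp_I_dot_two_pi_smul]
  rw [tsum_eq_finsum_mem_genSet_tsum hMT hsum]
  refine finsum_mem_congr rfl fun h _ => ?_
  simp only [hφ, AddChar.map_add_eq_mul, expChar_mulVec hyT, mul_one]
  rw [tsum_mul_right, tsum_mul_right, bracketSum]
  ring

def fundamentalMultiplier (M : Matrix (Fin d) (Fin d) ℤ) (f : (Fin d → ℝ) → ℂ)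
    (r : (Fin d → ℤ) → (Fin d → ℤ)) (k : Fin d → ℤ) : ℂ :=
  ((M.det.natAbs : ℂ) * bracketSum M f (r k))⁻¹

lemma fundamentalMultiplier_add_mulVec {r : (Fin d → ℤ) → (Fin d → ℤ)} (hM : M.det ≠ 0)
    (hr : ∀ k, r k ∈ genSet d Mᵀ ∧ ∃ z, k = r k + Mᵀ *ᵥ z) (k z : Fin d → ℤ) :
    fundamentalMultiplier M f r (k + Mᵀ *ᵥ z) = fundamentalMultiplier M f r k := by
  have hMT : Mᵀ.det ≠ 0 := by rwa [Matrix.det_transpose]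
  obtain ⟨z', hz'⟩ := (hr k).2
  rw [fundamentalMultiplier, selector_eq_of_eq_add_mulVec hMT hr (hr k).1 (z := z' + z)
    (by rw [Matrix.mulVec_add, ← add_assoc, ← hz']), fundamentalMultiplier]

lemma fundamentalMultiplier_mul_bracketSum {r : (Fin d → ℤ) → (Fin d → ℤ)} (hM : M.det ≠ 0)
    (hr : ∀ k, r k ∈ genSet d Mᵀ ∧ ∃ z, k = r k + Mᵀ *ᵥ z) {h : Fin d → ℤ}
    (hh : h ∈ genSet d Mᵀ) (hbr : bracketSum M f h ≠ 0) :
    fundamentalMultiplier M f r h * bracketSum M f h = (M.det.natAbs : ℂ)⁻¹ := by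
  have hMT : Mᵀ.det ≠ 0 := by rwa [Matrix.det_transpose]
  rw [fundamentalMultiplier, selector_eq_of_eq_add_mulVec hMT hr hh (k := h) (z := 0) (by simp),
    mul_inv, mul_assoc, inv_mul_cancel₀ hbr, mul_one]

end FourierMultiplier

theorem fundamentalInterpolant_construction_general
    (d : ℕ)
    (M : Matrix (Fin d) (Fin d) ℤ) (hM : M.det ≠ 0)
    (f : (Fin d → ℝ) → ℂ) (hfW : InWiener d f)
    (r : (Fin d → ℤ) → (Fin d → ℤ))
    (hr : ∀ k : Fin d → ℤ, r k ∈ genSet d Mᵀ ∧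
      ∃ z : Fin d → ℤ, k = r k + Matrix.mulVec Mᵀ z)
    (hbr : ∀ h ∈ genSet d Mᵀ,
      (∑' z : Fin d → ℤ, fCoeff d f (h + Matrix.mulVec Mᵀ z)) ≠ 0) :
    IsFundamentalInterpolant d M f
      (fun x => ∑' k : Fin d → ℤ,
        (fCoeff d f k /
            ((M.det.natAbs : ℂ) *
              ∑' z : Fin d → ℤ, fCoeff d f (r k + Matrix.mulVec Mᵀ z))) *
          Complex.exp (Complex.I * (dot d k x : ℝ))) := by
  have hMT : Mᵀ.det ≠ 0 := by rwa [Matrix.det_transpose]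
  have hφ := fundamentalMultiplier_add_mulVec (f := f) hM hr
  show IsFundamentalInterpolant d M f (fourierMul f (fundamentalMultiplier M f r))
  refine ⟨fourierMul_mem_spanTranslates hM hfW hφ, fun y hy => ?_⟩
  have hyT : y ∈ lattice d Mᵀᵀ := by rw [Matrix.transpose_transpose]; exact hy.1
  rw [fourierMul_two_pi_smul hM hfW hφ hy.1,
    finsum_mem_congr rfl fun h hh => by
      rw [mul_right_comm, fundamentalMultiplier_mul_bracketSum hM hr hh (hbr h hh)],
    ← mul_finsum_mem, finsum_mem_genSet_expChar hMT hyT, Matrix.det_transpose]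
  split_ifs
  · exact inv_mul_cancel₀ (by exact_mod_cast Int.natAbs_ne_zero.2 hM)
  · exact mul_zero _

/-- construction of the fundamental interpolant from nonvanishing
bracket sums. -/
theorem fundamentalInterpolant_construction
    (d : ℕ) (hd : 0 < d)
    (M : Matrix (Fin d) (Fin d) ℤ) (hM : M.det ≠ 0)
    (f : (Fin d → ℝ) → ℂ) (hfper : TorusFun d f) (hfW : InWiener d f)
    (r : (Fin d → ℤ) → (Fin d → ℤ))
    (hr : ∀ k : Fin d → ℤ, r k ∈ genSet d Mᵀ ∧
      ∃ z : Fin d → ℤ, k = r k + Matrix.mulVec Mᵀ z)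
    (hbr : ∀ h ∈ genSet d Mᵀ,
      (∑' z : Fin d → ℤ, fCoeff d f (h + Matrix.mulVec Mᵀ z)) ≠ 0) :
    IsFundamentalInterpolant d M f
      (fun x => ∑' k : Fin d → ℤ,
        (fCoeff d f k /
            ((M.det.natAbs : ℂ) *
              ∑' z : Fin d → ℤ, fCoeff d f (r k + Matrix.mulVec Mᵀ z))) *
          Complex.exp (Complex.I * (dot d k x : ℝ))) :=
  fundamentalInterpolant_construction_general d M hM f hfW r hr hbr

end ElastFFT
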